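/- arXiv:1511.00601 — 4 statements merged into one kernel-verified Lean document; each statement's English description precedes it below -/
import Mathlib

section
/- Let H ∈ ℤ[x] be a non-constant square-free polynomial and let 0 < δ < 1/11. Then the number of positive integers n ≤ x for which there exists a prime p with x^δ < p ≤ x^{1−δ} and p² ∣ H(n) is O(x^{1−δ}). -/
/-!
Over `ℚ` the square-free polynomial `H` is separable, so its resultant with `H'` is a nonzero
integer `N = H A + H' B`. For a prime `p ∤ N` every root of `H` modulo `p²` is simple, hence
(Hensel) determined by its reduction modulo `p`; so `H` has at most `deg H` roots modulo `p²`
and at most `deg H · (x / p² + 1)` values `n ≤ x` satisfy `p² ∣ H(n)`. Once `x^δ ≥ |N|`, summing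
over the primes `x^δ < p ≤ x^{1-δ}` gives at most `deg H · (2 x / x^δ + x^{1-δ}) = 3 deg H · x^{1-δ}`.
-/

open Polynomial Finset

namespace Polynomial

lemma isUnit_or_irreducible_map_intCast {p : ℤ[X]} (hp : Irreducible p) :
    IsUnit (p.map (Int.castRingHom ℚ)) ∨
      p.IsPrimitive ∧ Irreducible (p.map (Int.castRingHom ℚ)) := by
  by_cases hdeg : p.natDegree = 0
  · left
    rw [isUnit_iff_degree_eq_zero, degree_map_eq_of_injective (RingHom.injective_int _),
      degree_eq_natDegree hp.ne_zero, hdeg, Nat.cast_zero]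
  · have hprim := hp.isPrimitive hdeg
    exact Or.inr ⟨hprim, (IsPrimitive.Int.irreducible_iff_irreducible_map_cast hprim).mp hp⟩

lemma isRelPrime_map_intCast {p q : ℤ[X]} (hp : Irreducible p) (hq : Irreducible q)
    (hpq : ¬Associated p q) :
    IsRelPrime (p.map (Int.castRingHom ℚ)) (q.map (Int.castRingHom ℚ)) := by
  rcases isUnit_or_irreducible_map_intCast hp with hpu | ⟨hprim, hpirr⟩
  · exact hpu.isRelPrime_left
  rcases isUnit_or_irreducible_map_intCast hq with hqu | ⟨-, -⟩
  · exact hqu.isRelPrime_right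
  refine hpirr.isRelPrime_iff_not_dvd.mpr fun hdvd => hpq (hp.associated_of_dvd hq ?_)
  exact (IsPrimitive.Int.dvd_iff_map_cast_dvd_map_cast p q hprim).mpr hdvd

lemma separable_map_intCast_prod {ι : Type*} [Fintype ι] {P : ι → ℤ[X]}
    (hirr : ∀ i, Irreducible (P i)) (hprop : ∀ i j, i ≠ j → ¬Associated (P i) (P j)) :
    ((∏ i, P i).map (Int.castRingHom ℚ)).Separable := by
  rw [PerfectField.separable_iff_squarefree, Polynomial.map_prod]
  refine Finset.squarefree_prod_of_pairwise_isCoprime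
    (fun i _ j _ hij => isRelPrime_map_intCast (hirr i) (hirr j) (hprop i j hij)) fun i _ => ?_
  rcases isUnit_or_irreducible_map_intCast (hirr i) with hu | ⟨-, hirr'⟩
  exacts [hu.squarefree, hirr'.squarefree]

theorem exists_mul_add_derivative_mul_eq_C {R K : Type*} [CommRing R] [Field K]
    {φ : R →+* K} (hφ : Function.Injective φ) {f : R[X]} (hf : 0 < f.natDegree)
    (hsep : (f.map φ).Separable) :
    ∃ A B : R[X], ∃ N : R, N ≠ 0 ∧ f * A + derivative f * B = C N := by
  obtain ⟨A, B, -, -, hAB⟩ := exists_mul_add_mul_eq_C_resultant f (derivative f) le_rfl le_rfl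
    (Or.inl hf.ne')
  refine ⟨A, B, _, fun h0 => ?_, hAB⟩
  have hφres := resultant_map_map (f := f) (g := derivative f) (m := f.natDegree)
    (n := (derivative f).natDegree) φ
  rw [h0, map_zero, ← natDegree_map_eq_of_injective hφ f,
    ← natDegree_map_eq_of_injective hφ (derivative f), ← derivative_map] at hφres
  exact resultant_ne_zero _ _ hsep hφres

lemma isUnit_eval_derivative_of_isRoot {R : Type*} [CommRing R] {f A B : R[X]} {N : R}
    (hAB : f * A + derivative f * B = C N) (hN : IsUnit N) {z : R} (hz : f.IsRoot z) :
    IsUnit ((derivative f).eval z) := by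
  have h := congrArg (eval z) hAB
  rw [eval_add, eval_mul, eval_mul, hz.eq_zero, zero_mul, zero_add, eval_C] at h
  exact isUnit_of_mul_isUnit_left (h ▸ hN)

lemma ne_zero_of_mul_add_derivative_mul_eq_C {R : Type*} [CommRing R] [Nontrivial R]
    {f A B : R[X]} {N : R} (hAB : f * A + derivative f * B = C N) (hN : IsUnit N) : f ≠ 0 := by
  rintro rfl
  rw [derivative_zero, zero_mul, zero_mul, add_zero, eq_comm, C_eq_zero] at hAB
  exact hN.ne_zero hAB

lemma eq_of_isRoot_of_sq_sub_eq_zero {R : Type*} [CommRing R] {f : R[X]} {a b : R}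
    (ha : f.IsRoot a) (hb : f.IsRoot b) (hf' : IsUnit ((derivative f).eval a))
    (hab : (b - a) ^ 2 = 0) : a = b := by
  obtain ⟨k, hk⟩ := f.binomExpansion a (b - a)
  rw [add_sub_cancel, hb.eq_zero, ha.eq_zero, hab, mul_zero, add_zero, zero_add, eq_comm,
    hf'.mul_right_eq_zero, sub_eq_zero] at hk
  exact hk.symm

lemma card_isRoot_le_of_sq_eq_zero {R S : Type*} [CommRing R] [Fintype R] [DecidableEq R]
    [CommRing S] [IsDomain S] [DecidableEq S] (π : R →+* S) (hπ : ∀ y, π y = 0 → y ^ 2 = 0)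
    {f : R[X]} [DecidablePred f.IsRoot] (hf : f.map π ≠ 0)
    (hf' : ∀ z, f.IsRoot z → IsUnit ((derivative f).eval z)) :
    #{z | f.IsRoot z} ≤ f.natDegree := by
  calc #{z | f.IsRoot z} ≤ (f.map π).roots.toFinset.card := by
        refine card_le_card_of_injOn π (fun z hz => ?_) fun a ha b hb hab => ?_
        · simp only [coe_filter, mem_univ, true_and, Set.mem_ofPred_eq] at hz
          simpa [mem_roots hf] using hz.map (f := π)
        · simp only [coe_filter, mem_univ, true_and, Set.mem_ofPred_eq] at ha hb
          refine eq_of_isRoot_of_sq_sub_eq_zero ha hb (hf' a ha) (hπ _ ?_)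
          rw [map_sub, hab, sub_self]
    _ ≤ (f.map π).natDegree := (Multiset.toFinset_card_le _).trans (card_roots' _)
    _ ≤ f.natDegree := natDegree_map_le

end Polynomial

lemma ZMod.sq_eq_zero_of_castHom_eq_zero {p : ℕ} {y : ZMod (p ^ 2)}
    (hy : ZMod.castHom (dvd_pow_self p two_ne_zero) (ZMod p) y = 0) : y ^ 2 = 0 := by
  rw [← ZMod.intCast_zmod_cast y, map_intCast, ZMod.intCast_zmod_eq_zero_iff_dvd] at hy
  obtain ⟨t, ht⟩ := hy
  rw [← ZMod.intCast_zmod_cast y, ht, ← Int.cast_pow, ZMod.intCast_zmod_eq_zero_iff_dvd, mul_pow]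
  exact dvd_mul_right _ _

lemma isUnit_intCast_zmod_prime_pow {p : ℕ} (hp : p.Prime) (k : ℕ) {N : ℤ}
    (hpN : ¬(p : ℤ) ∣ N) : IsUnit (N : ZMod (p ^ k)) := by
  rw [ZMod.coe_int_isUnit_iff_isCoprime, Nat.cast_pow]
  exact ((Nat.prime_iff_prime_int.mp hp).coprime_iff_not_dvd.mpr hpN).pow_left

theorem card_isRoot_zmod_sq_le {H A B : ℤ[X]} {N : ℤ} (hAB : H * A + derivative H * B = C N)
    {p : ℕ} [Fact p.Prime] (hpN : ¬(p : ℤ) ∣ N) :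
    #{z : ZMod (p ^ 2) | (H.map (Int.castRingHom _)).IsRoot z} ≤ H.natDegree := by
  have hmap {R : Type} [CommRing R] (ψ : ℤ →+* R) :
      H.map ψ * A.map ψ + derivative (H.map ψ) * B.map ψ = C (ψ N) := by
    simpa [derivative_map] using congrArg (map ψ) hAB
  set ψ := Int.castRingHom (ZMod (p ^ 2))
  set π := ZMod.castHom (dvd_pow_self p two_ne_zero) (ZMod p)
  have hN : IsUnit (ψ N) := isUnit_intCast_zmod_prime_pow Fact.out 2 hpN
  refine (card_isRoot_le_of_sq_eq_zero π (fun _ => ZMod.sq_eq_zero_of_castHom_eq_zero) ?_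
    fun z hz => isUnit_eval_derivative_of_isRoot (hmap ψ) hN hz).trans natDegree_map_le
  rw [Polynomial.map_map]
  exact ne_zero_of_mul_add_derivative_mul_eq_C (hmap (π.comp ψ)) (hN.map π)

theorem card_filter_dvd_eval_le (H : ℤ[X]) (m : ℕ) [NeZero m] (M : ℕ) :
    #{n ∈ Icc 1 M | (m : ℤ) ∣ H.eval ((n : ℕ) : ℤ)} ≤
      #{z : ZMod m | (H.map (Int.castRingHom _)).IsRoot z} * (M / m + 1) := by
  rw [← card_range (M / m + 1), ← card_product]
  refine card_le_card_of_injOn (fun n : ℕ => ((n : ZMod m), n / m)) (fun n hn => ?_)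
    fun n₁ _ n₂ _ h => ?_
  · simp only [coe_filter, mem_Icc, Set.mem_ofPred_eq] at hn
    simp only [coe_product, coe_filter, mem_univ, true_and, coe_range, Set.mem_prod,
      Set.mem_ofPred_eq, Set.mem_Iio]
    refine ⟨?_, Nat.lt_succ_of_le (Nat.div_le_div_right hn.1.2)⟩
    rw [IsRoot, ← Int.cast_natCast, eval_intCast_map, eq_intCast,
      ZMod.intCast_zmod_eq_zero_iff_dvd]
    exact hn.2
  · simp only [Prod.mk.injEq] at h
    rw [← Nat.div_add_mod n₁ m, ← Nat.div_add_mod n₂ m, ← ZMod.val_natCast, h.1, h.2,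
      ZMod.val_natCast]

theorem card_filter_sq_dvd_eval_le {H A B : ℤ[X]} {N : ℤ}
    (hAB : H * A + derivative H * B = C N) {p : ℕ} (hp : p.Prime) (hpN : ¬(p : ℤ) ∣ N)
    (M : ℕ) :
    #{n ∈ Icc 1 M | (p : ℤ) ^ 2 ∣ H.eval ((n : ℕ) : ℤ)} ≤ H.natDegree * (M / p ^ 2 + 1) := by
  have := Fact.mk hp
  have hcount := card_filter_dvd_eval_le H (p ^ 2) M
  push_cast at hcount
  exact hcount.trans (Nat.mul_le_mul_right _ (card_isRoot_zmod_sq_le hAB hpN))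

lemma sum_Ioc_inv_sq_le (a b : ℕ) : ∑ i ∈ Ioc a b, ((i : ℝ) ^ 2)⁻¹ ≤ 2 / (a + 1) :=
  (sum_le_sum_of_subset_of_nonneg (Ioc_subset_Ioo_right b.lt_succ_self) fun _ _ _ => by
    positivity).trans (sum_Ioo_inv_sq_le a (b + 1))

open scoped Classical in
theorem card_filter_exists_prime_sq_dvd_eval_le {H A B : ℤ[X]} {N : ℤ}
    (hAB : H * A + derivative H * B = C N) (hN : N ≠ 0) {a : ℕ} (ha : N.natAbs ≤ a)
    (b M : ℕ) :
    (#{n ∈ Icc 1 M | ∃ p : ℕ, p.Prime ∧ a < p ∧ p ≤ b ∧ (p : ℤ) ^ 2 ∣ H.eval ((n : ℕ) : ℤ)} : ℝ)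
      ≤ H.natDegree * (2 * M / (a + 1) + b) := by
  set primes := {p ∈ Ioc a b | p.Prime}
  have hcover : {n ∈ Icc 1 M | ∃ p : ℕ, p.Prime ∧ a < p ∧ p ≤ b ∧
      (p : ℤ) ^ 2 ∣ H.eval ((n : ℕ) : ℤ)} ⊆
      primes.biUnion fun p => {n ∈ Icc 1 M | (p : ℤ) ^ 2 ∣ H.eval ((n : ℕ) : ℤ)} := by
    intro n hn
    simp only [mem_filter, mem_biUnion, mem_Ioc, primes] at hn ⊢
    obtain ⟨hnM, p, hp, hap, hpb, hpn⟩ := hn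
    exact ⟨p, ⟨⟨hap, hpb⟩, hp⟩, hnM, hpn⟩
  have hprime (p) (hp : p ∈ primes) :
      (#{n ∈ Icc 1 M | (p : ℤ) ^ 2 ∣ H.eval ((n : ℕ) : ℤ)} : ℝ) ≤
        H.natDegree * (M / (p : ℝ) ^ 2 + 1) := by
    simp only [mem_filter, mem_Ioc, primes] at hp
    have hpN : ¬(p : ℤ) ∣ N := fun h =>
      (ha.trans_lt hp.1.1).not_ge (Nat.le_of_dvd (Int.natAbs_pos.mpr hN) (Int.natCast_dvd.mp h))
    have := card_filter_sq_dvd_eval_le hAB hp.2 hpN M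
    calc _ ≤ ((H.natDegree * (M / p ^ 2 + 1) : ℕ) : ℝ) := by exact_mod_cast this
      _ ≤ _ := by
        push_cast
        gcongr
        exact_mod_cast Nat.cast_div_le
  calc _ ≤ ∑ p ∈ primes, (#{n ∈ Icc 1 M | (p : ℤ) ^ 2 ∣ H.eval ((n : ℕ) : ℤ)} : ℝ) := by
        exact_mod_cast (card_le_card hcover).trans card_biUnion_le
    _ ≤ ∑ p ∈ Ioc a b, H.natDegree * (M / (p : ℝ) ^ 2 + 1) :=
        (sum_le_sum hprime).trans
          (sum_le_sum_of_subset_of_nonneg (filter_subset _ _) fun _ _ _ => by positivity)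
    _ = H.natDegree * (M * ∑ p ∈ Ioc a b, ((p : ℝ) ^ 2)⁻¹ + #(Ioc a b)) := by
        rw [← mul_sum, sum_add_distrib, sum_const, nsmul_one, mul_sum]
        simp only [div_eq_mul_inv]
    _ ≤ H.natDegree * (2 * M / (a + 1) + b) := by
        gcongr
        · calc (M : ℝ) * ∑ p ∈ Ioc a b, ((p : ℝ) ^ 2)⁻¹ ≤ M * (2 / (a + 1)) := by
                gcongr; exact sum_Ioc_inv_sq_le a b
            _ = 2 * M / (a + 1) := by ring
        · exact_mod_cast (Nat.card_Ioc a b).trans_le (b.sub_le a)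

lemma two_mul_floor_div_add_floor_le {x : ℝ} (hx : 0 < x) (δ : ℝ) :
    2 * (⌊x⌋₊ : ℝ) / (⌊x ^ δ⌋₊ + 1) + ⌊x ^ (1 - δ)⌋₊ ≤ 3 * x ^ (1 - δ) := by
  have hxδ : 0 < x ^ δ := Real.rpow_pos_of_pos hx δ
  have hdiv : 2 * (⌊x⌋₊ : ℝ) / (⌊x ^ δ⌋₊ + 1) ≤ 2 * x ^ (1 - δ) := by
    rw [Real.rpow_sub hx, Real.rpow_one, ← mul_div_assoc]
    gcongr
    · exact Nat.floor_le hx.le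
    · exact (Nat.lt_floor_add_one _).le
  linarith [Nat.floor_le (Real.rpow_nonneg hx.le (1 - δ))]

theorem sigma21_bound_general
    (κ : ℕ) (H : Polynomial ℤ) (P : Fin κ → Polynomial ℤ)
    (hH : H = ∏ i, P i) (hnc : 0 < H.natDegree)
    (hirr : ∀ i, Irreducible (P i))
    (hprop : ∀ i j, i ≠ j → ¬ Associated (P i) (P j))
    (δ : ℝ) (hδ0 : 0 < δ) :
    ∃ C : ℝ, ∃ x₀ : ℝ, ∀ x : ℝ, x₀ ≤ x →
      (({n : ℕ | 1 ≤ n ∧ (n : ℝ) ≤ x ∧ ∃ p : ℕ, p.Prime ∧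
          x ^ δ < (p : ℝ) ∧ (p : ℝ) ≤ x ^ (1 - δ) ∧
          (p : ℤ) ^ 2 ∣ H.eval (n : ℤ)}.ncard : ℝ)) ≤ C * x ^ (1 - δ) := by
  classical
  obtain ⟨A, B, N, hN, hAB⟩ := exists_mul_add_derivative_mul_eq_C (RingHom.injective_int _) hnc
    (hH ▸ separable_map_intCast_prod hirr hprop)
  refine ⟨3 * H.natDegree, max 1 ((N.natAbs : ℝ) ^ δ⁻¹), fun x hx₀ => ?_⟩
  have hx : 0 < x := zero_lt_one.trans_le (le_of_max_le_left hx₀)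
  have hNx : (N.natAbs : ℝ) ≤ x ^ δ :=
    (Real.rpow_inv_le_iff_of_pos (by positivity) hx.le hδ0).mp (le_of_max_le_right hx₀)
  set S := {n ∈ Icc 1 ⌊x⌋₊ | ∃ p : ℕ, p.Prime ∧ ⌊x ^ δ⌋₊ < p ∧ p ≤ ⌊x ^ (1 - δ)⌋₊ ∧
    (p : ℤ) ^ 2 ∣ H.eval ((n : ℕ) : ℤ)}
  calc _ ≤ (#S : ℝ) := by
        rw [← Set.ncard_coe_finset, Nat.cast_le]
        refine Set.ncard_le_ncard (fun n ⟨hn1, hnx, p, hp, hpl, hpu, hpn⟩ => ?_) S.finite_toSet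
        simp only [S, coe_filter, mem_Icc, Set.mem_ofPred_eq]
        exact ⟨⟨hn1, Nat.le_floor hnx⟩, p, hp, (Nat.floor_lt (by positivity)).mpr hpl,
          Nat.le_floor hpu, hpn⟩
    _ ≤ H.natDegree * (2 * ⌊x⌋₊ / (⌊x ^ δ⌋₊ + 1) + ⌊x ^ (1 - δ)⌋₊) :=
        card_filter_exists_prime_sq_dvd_eval_le hAB hN (Nat.le_floor hNx) _ _
    _ ≤ H.natDegree * (3 * x ^ (1 - δ)) := by gcongr; exact two_mul_floor_div_add_floor_le hx δ
    _ = 3 * H.natDegree * x ^ (1 - δ) := by ring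

/-- Let `H ∈ ℤ[x]` be a non-constant square-free polynomial and `0 < δ < 1/11`.
Then the number of positive integers `n ≤ x` for which some prime
`p ∈ (x^δ, x^{1−δ}]` satisfies `p² ∣ H(n)` is `O(x^{1−δ})`. -/
theorem sigma21_bound
    (κ : ℕ) (hκ : 0 < κ) (H : Polynomial ℤ) (P : Fin κ → Polynomial ℤ)
    (hH : H = ∏ i, P i) (hnc : 0 < H.natDegree)
    (hirr : ∀ i, Irreducible (P i))
    (hprop : ∀ i j, i ≠ j → ¬ Associated (P i) (P j))
    (δ : ℝ) (hδ0 : 0 < δ) (hδ : δ < 1 / 11) :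
    ∃ C : ℝ, ∃ x₀ : ℝ, ∀ x : ℝ, x₀ ≤ x →
      (({n : ℕ | 1 ≤ n ∧ (n : ℝ) ≤ x ∧ ∃ p : ℕ, p.Prime ∧
          x ^ δ < (p : ℝ) ∧ (p : ℝ) ≤ x ^ (1 - δ) ∧
          (p : ℤ) ^ 2 ∣ H.eval (n : ℤ)}.ncard : ℝ)) ≤ C * x ^ (1 - δ) :=
  sigma21_bound_general κ H P hH hnc hirr hprop δ hδ0
end

section
/- For every integer k ≥ 1 and every real x > 0 one has (−1)^{k−1} Ein^{(k)}(x)/k! = (1/k) e^{−x} ∑_{n=0}^∞ x^n/(n+k)!; consequently 0 ≤ (−1)^{k−1} Ein^{(k)}(x)/k! ≤ 1/(k·k!), and moreover |Ein^{(k+1)}(x)|/(k+1)! ≤ |Ein^{(k)}(x)|/k!, i.e. for each fixed x > 0 the sequence Ein^{(k)}(x)/k! is alternating in sign and decreasing in absolute value. -/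
/-!
With `F k x = e^{-x} ∑ₙ xⁿ/(n+k)!`, the exponential series gives the closed form
`F k x = (1 - e^{-x} ∑_{j<k} x^j/j!) / x^k` for `x ≠ 0`. Hence `Ein' = F 1` and the quotient rule gives
`F' (k+1) = -(k+1) F (k+2)`, so `Ein^{(k+1)} = (-1)^k k! F (k+1)`. The bounds are termwise comparisons
of the series: `n! k! ≤ (n+k)!` gives `F k ≤ 1/k!`, and `(n+k)! ≤ (n+k+1)!` gives `F (k+1) ≤ F k`.
-/

/-- `Ein(x) = ∫_0^x (1 − e^{−t})/t dt`, with the integrand extended continuously by the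
value `1` at `t = 0`. -/
noncomputable def Ein (x : ℝ) : ℝ :=
  ∫ t in (0:ℝ)..x, if t = 0 then 1 else (1 - Real.exp (-t)) / t

open Real Finset Nat Filter Topology

noncomputable def expPartialSum (k : ℕ) (x : ℝ) : ℝ := ∑ j ∈ range k, x ^ j / j !

noncomputable def expTail (k : ℕ) (x : ℝ) : ℝ := ∑' n, x ^ n / (n + k)!

-- The function `F` of the proof idea above.
noncomputable def dampedExpTail (k : ℕ) (x : ℝ) : ℝ := exp (-x) * expTail k x

lemma expPartialSum_succ (k : ℕ) (x : ℝ) :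
    expPartialSum (k + 1) x = expPartialSum k x + x ^ k / k ! :=
  sum_range_succ _ _

lemma hasDerivAt_expPartialSum_succ (k : ℕ) (x : ℝ) :
    HasDerivAt (expPartialSum (k + 1)) (expPartialSum k x) x := by
  refine (HasDerivAt.fun_sum (u := range (k + 1))
    (fun j _ => (hasDerivAt_pow j x).div_const (j ! : ℝ))).congr_deriv ?_
  rw [sum_range_succ', expPartialSum]
  simp only [CharP.cast_eq_zero, zero_mul, zero_div, add_zero, factorial_succ]
  refine sum_congr rfl fun j _ => ?_
  push_cast
  field_simp

lemma summable_pow_div_factorial_add (k : ℕ) (x : ℝ) :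
    Summable fun n => x ^ n / (n + k)! := by
  refine .of_norm_bounded (Real.summable_pow_div_factorial |x|) fun n => ?_
  rw [norm_div, norm_pow, Real.norm_eq_abs, RCLike.norm_natCast]
  gcongr
  exact le_add_right n k

lemma pow_mul_expTail (k : ℕ) (x : ℝ) : x ^ k * expTail k x = exp x - expPartialSum k x := by
  have h := (hasSum_nat_add_iff' k).2 (NormedSpace.expSeries_div_hasSum_exp x)
  rw [← Real.exp_eq_exp_ℝ] at h
  rw [expTail, ← tsum_mul_left, expPartialSum, ← h.tsum_eq]
  simp only [pow_add, mul_div_assoc, mul_comm]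

lemma dampedExpTail_eq (k : ℕ) {x : ℝ} (hx : x ≠ 0) :
    dampedExpTail k x = (1 - exp (-x) * expPartialSum k x) / x ^ k := by
  rw [eq_div_iff (pow_ne_zero k hx), dampedExpTail, mul_assoc, mul_comm _ (x ^ k),
    pow_mul_expTail, mul_sub, ← exp_add, neg_add_cancel, exp_zero]

lemma hasDerivAt_dampedExpTail_succ (k : ℕ) {x : ℝ} (hx : x ≠ 0) :
    HasDerivAt (dampedExpTail (k + 1)) (-(k + 1) * dampedExpTail (k + 2) x) x := by
  have hclosed : dampedExpTail (k + 1) =ᶠ[𝓝 x]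
      fun y => (1 - exp (-y) * expPartialSum (k + 1) y) / y ^ (k + 1) := by
    filter_upwards [isOpen_ne.mem_nhds hx] with y hy using dampedExpTail_eq _ hy
  have hnum : HasDerivAt (fun y => 1 - exp (-y) * expPartialSum (k + 1) y)
      (-(-exp (-x) * expPartialSum (k + 1) x + exp (-x) * expPartialSum k x)) x := by
    simpa using ((hasDerivAt_neg x).exp.mul (hasDerivAt_expPartialSum_succ k x)).const_sub 1
  have hden : HasDerivAt (fun y : ℝ => y ^ (k + 1)) ((k + 1 : ℕ) * x ^ k) x :=
    hasDerivAt_pow (k + 1) x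
  refine ((hnum.div hden (pow_ne_zero _ hx)).congr_of_eventuallyEq hclosed).congr_deriv ?_
  rw [dampedExpTail_eq _ hx, expPartialSum_succ (k + 1), expPartialSum_succ k, factorial_succ]
  push_cast
  field_simp
  ring

lemma dampedExpTail_nonneg (k : ℕ) {x : ℝ} (hx : 0 ≤ x) : 0 ≤ dampedExpTail k x :=
  mul_nonneg (exp_nonneg _) (tsum_nonneg fun n => by positivity)

lemma dampedExpTail_le_inv_factorial (k : ℕ) {x : ℝ} (hx : 0 ≤ x) :
    dampedExpTail k x ≤ 1 / k ! := by
  have htail : expTail k x ≤ exp x / k ! := by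
    rw [Real.exp_eq_exp_ℝ, NormedSpace.exp_eq_tsum_div, ← tsum_div_const]
    refine (summable_pow_div_factorial_add k x).tsum_le_tsum (fun n => ?_)
      ((Real.summable_pow_div_factorial x).div_const _)
    rw [div_div]
    gcongr
    exact_mod_cast le_of_dvd (factorial_pos _) (factorial_mul_factorial_dvd_factorial_add n k)
  calc dampedExpTail k x ≤ exp (-x) * (exp x / k !) := by
        unfold dampedExpTail; gcongr
    _ = 1 / k ! := by rw [← mul_div_assoc, ← exp_add, neg_add_cancel, exp_zero]

lemma dampedExpTail_succ_le (k : ℕ) {x : ℝ} (hx : 0 ≤ x) :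
    dampedExpTail (k + 1) x ≤ dampedExpTail k x := by
  unfold dampedExpTail expTail
  gcongr
  · exact summable_pow_div_factorial_add _ x
  · exact summable_pow_div_factorial_add k x
  · exact le_add_right k 1

-- `dslope f a` is continuous at `a` as soon as `f` is differentiable there.
lemma einIntegrand_eq_dslope :
    (fun t : ℝ => if t = 0 then 1 else (1 - exp (-t)) / t) = dslope (fun t => -exp (-t)) 0 := by
  funext t
  rcases eq_or_ne t 0 with rfl | ht
  · have : HasDerivAt (fun t : ℝ => -exp (-t)) 1 0 := by
      simpa using ((hasDerivAt_neg (0 : ℝ)).exp).fun_neg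
    simp [this.deriv]
  · simp [ht, dslope_of_ne _ ht, slope_def_field, neg_add_eq_sub]

lemma hasDerivAt_Ein (x : ℝ) :
    HasDerivAt Ein (if x = 0 then 1 else (1 - exp (-x)) / x) x := by
  have hcont : Continuous (dslope (fun t : ℝ => -exp (-t)) 0) :=
    continuousOn_univ.1 <| (continuousOn_dslope univ_mem).2 ⟨by fun_prop, by fun_prop⟩
  rw [← einIntegrand_eq_dslope] at hcont
  exact (hcont.integral_hasStrictDerivAt 0 x).hasDerivAt

lemma iteratedDeriv_succ_Ein (k : ℕ) {x : ℝ} (hx : x ≠ 0) :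
    iteratedDeriv (k + 1) Ein x = (-1) ^ k * k ! * dampedExpTail (k + 1) x := by
  induction k generalizing x with
  | zero =>
    rw [iteratedDeriv_one, (hasDerivAt_Ein x).deriv, if_neg hx, dampedExpTail_eq 1 hx]
    simp [expPartialSum]
  | succ k ih =>
    have hnear : iteratedDeriv (k + 1) Ein =ᶠ[𝓝 x]
        fun y => (-1) ^ k * k ! * dampedExpTail (k + 1) y := by
      filter_upwards [isOpen_ne.mem_nhds hx] with y hy using ih hy
    rw [iteratedDeriv_succ, hnear.deriv_eq,
      ((hasDerivAt_dampedExpTail_succ k hx).const_mul _).deriv, factorial_succ]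
    push_cast
    ring

lemma neg_one_pow_mul_iteratedDeriv_succ_Ein_div_factorial (k : ℕ) {x : ℝ} (hx : x ≠ 0) :
    (-1) ^ k * iteratedDeriv (k + 1) Ein x / (k + 1)! = dampedExpTail (k + 1) x / (k + 1) := by
  rw [iteratedDeriv_succ_Ein k hx, ← mul_assoc, ← mul_assoc, ← pow_add, Even.neg_one_pow ⟨k, rfl⟩,
    factorial_succ]
  push_cast
  field_simp

lemma abs_iteratedDeriv_succ_Ein_div_factorial (k : ℕ) {x : ℝ} (hx : 0 < x) :
    |iteratedDeriv (k + 1) Ein x| / (k + 1)! = dampedExpTail (k + 1) x / (k + 1) := by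
  have hnonneg : 0 ≤ dampedExpTail (k + 1) x / (k + 1) :=
    div_nonneg (dampedExpTail_nonneg _ hx.le) (by positivity)
  rw [← abs_of_nonneg hnonneg, ← neg_one_pow_mul_iteratedDeriv_succ_Ein_div_factorial k hx.ne',
    abs_div, abs_mul, abs_neg_one_pow, one_mul, Nat.abs_cast]

/-- For every integer `k ≥ 1` and real `x > 0`, one has
`(−1)^{k−1} Ein^{(k)}(x)/k! = (1/k) e^{−x} ∑_{n=0}^∞ x^n/(n+k)!`, hence
`0 ≤ (−1)^{k−1} Ein^{(k)}(x)/k! ≤ 1/(k⋅k!)`, and the sequence `Ein^{(k)}(x)/k!` is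
decreasing in absolute value. -/
theorem Ein_iteratedDeriv_alternating (k : ℕ) (hk : 1 ≤ k) (x : ℝ) (hx : 0 < x) :
    ((-1 : ℝ) ^ (k - 1) * iteratedDeriv k Ein x / (Nat.factorial k) =
      (1 / (k : ℝ)) * Real.exp (-x) * ∑' n : ℕ, x ^ n / (Nat.factorial (n + k))) ∧
    (0 ≤ (-1 : ℝ) ^ (k - 1) * iteratedDeriv k Ein x / (Nat.factorial k)) ∧
    ((-1 : ℝ) ^ (k - 1) * iteratedDeriv k Ein x / (Nat.factorial k) ≤
      1 / ((k : ℝ) * (Nat.factorial k))) ∧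
    (|iteratedDeriv (k + 1) Ein x| / (Nat.factorial (k + 1)) ≤
      |iteratedDeriv k Ein x| / (Nat.factorial k)) := by
  obtain ⟨k, rfl⟩ := Nat.exists_eq_add_of_le' hk
  rw [Nat.add_sub_cancel, neg_one_pow_mul_iteratedDeriv_succ_Ein_div_factorial k hx.ne',
    abs_iteratedDeriv_succ_Ein_div_factorial k hx, abs_iteratedDeriv_succ_Ein_div_factorial _ hx]
  push_cast
  refine ⟨by rw [dampedExpTail, expTail]; ring, ?_, ?_, ?_⟩
  · exact div_nonneg (dampedExpTail_nonneg _ hx.le) (by positivity)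
  · rw [mul_comm, ← div_div]
    gcongr
    exact dampedExpTail_le_inv_factorial _ hx.le
  · gcongr
    · exact dampedExpTail_nonneg _ hx.le
    · exact dampedExpTail_succ_le _ hx.le
    · linarith
end

section
/- Let κ ≥ 1 be an integer. Define real numbers a_0, …, a_{2κ−1} by a_{2κ−1} = 1 and, for 0 ≤ r < 2κ−1, a_r = −(κ/(2κ−1−r)) ∑_{n=r+1}^{2κ−1} binom(n, r) a_n, and set q(u) = ∑_{n=0}^{2κ−1} a_n u^n. Then q satisfies the differential-delay equation (d/du)(u·q(u)) = κ(q(u) + q(u+1)) for all real u, and lim_{u→∞} u^{1−2κ} q(u) = 1. -/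
/-!
Write `M = 2κ - 1`. Expanding `q (u + 1)` by the binomial theorem, the coefficient of `u ^ r` in
`κ (q u + q (u + 1))` is `κ (2 a_r + ∑_{n > r} C(n, r) a_n)`, while in `(u q u)'` it is
`(r + 1) a_r`; since `2κ = M + 1`, the recursion for `a_r` says exactly that the two agree.
The limit is the leading coefficient `a_M = 1`.
-/

open Finset Filter Topology

theorem sum_mul_add_one_pow {R : Type*} [CommSemiring R] (a : ℕ → R) (M : ℕ) (u : R) :
    ∑ n ∈ range (M + 1), a n * (u + 1) ^ n
      = ∑ k ∈ range (M + 1), (∑ n ∈ Icc k M, (n.choose k : R) * a n) * u ^ k := by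
  calc ∑ n ∈ range (M + 1), a n * (u + 1) ^ n
      = ∑ n ∈ range (M + 1), ∑ k ∈ range (n + 1), (n.choose k : R) * a n * u ^ k := by
        refine sum_congr rfl fun n _ => ?_
        rw [add_pow, mul_sum]
        exact sum_congr rfl fun k _ => by rw [one_pow]; ring
    _ = ∑ k ∈ range (M + 1), ∑ n ∈ Icc k M, (n.choose k : R) * a n * u ^ k :=
        sum_comm' fun n k => by simp only [mem_range, mem_Icc]; omega
    _ = _ := sum_congr rfl fun k _ => (sum_mul ..).symm

theorem add_one_mul_eq_of_rec {K : Type*} [Field K] [CharZero K] (c : K) (M : ℕ)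
    (hM : (M : K) + 1 = 2 * c) (a : ℕ → K)
    (ha_rec : ∀ r : ℕ, r < M →
      a r = -(c / (2 * c - 1 - (r : K))) * ∑ n ∈ Icc (r + 1) M, (n.choose r : K) * a n)
    (r : ℕ) (hr : r ≤ M) :
    ((r : K) + 1) * a r = c * (a r + ∑ n ∈ Icc r M, (n.choose r : K) * a n) := by
  rw [← insert_Icc_add_one_left_eq_Icc hr, sum_insert (by simp), Nat.choose_self, Nat.cast_one,
    one_mul]
  rcases hr.lt_or_eq with hlt | rfl
  · have hne : 2 * c - 1 - r ≠ 0 := by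
      rw [← hM, add_sub_cancel_right, ← Nat.cast_sub hlt.le, Nat.cast_ne_zero]
      omega
    have key : (2 * c - 1 - r) * a r = -(c * ∑ n ∈ Icc (r + 1) M, (n.choose r : K) * a n) := by
      rw [ha_rec r hlt]
      field_simp
    linear_combination -key
  · rw [Icc_eq_empty (by omega), sum_empty]
    linear_combination (a r) * hM

theorem mul_sum_pow_add_sum_add_one_pow {R : Type*} [CommSemiring R] (c : R) (M : ℕ) (a : ℕ → R)
    (hcoef : ∀ r ≤ M, ((r : R) + 1) * a r = c * (a r + ∑ n ∈ Icc r M, (n.choose r : R) * a n))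
    (u : R) :
    c * (∑ n ∈ range (M + 1), a n * u ^ n + ∑ n ∈ range (M + 1), a n * (u + 1) ^ n)
      = ∑ n ∈ range (M + 1), ((n : R) + 1) * a n * u ^ n := by
  rw [sum_mul_add_one_pow, ← sum_add_distrib, mul_sum]
  refine sum_congr rfl fun r hr => ?_
  rw [hcoef r (Nat.lt_succ_iff.mp (mem_range.mp hr))]
  ring

theorem hasDerivAt_mul_sum_pow {𝕜 : Type*} [NontriviallyNormedField 𝕜] (a : ℕ → 𝕜)
    (s : Finset ℕ) (u : 𝕜) :
    HasDerivAt (fun t => t * ∑ n ∈ s, a n * t ^ n) (∑ n ∈ s, ((n : 𝕜) + 1) * a n * u ^ n) u := by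
  have hfun : (fun t : 𝕜 => t * ∑ n ∈ s, a n * t ^ n) = fun t => ∑ n ∈ s, a n * t ^ (n + 1) := by
    funext t
    rw [mul_sum]
    exact sum_congr rfl fun n _ => by ring
  rw [hfun]
  refine HasDerivAt.fun_sum fun n _ => ?_
  refine ((hasDerivAt_pow (n + 1) u).const_mul (a n)).congr_deriv ?_
  push_cast
  ring

theorem tendsto_zpow_neg_mul_sum_pow (a : ℕ → ℝ) (M : ℕ) :
    Tendsto (fun u : ℝ => u ^ (-(M : ℤ)) * ∑ n ∈ range (M + 1), a n * u ^ n) atTop (𝓝 (a M)) := by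
  have heq : (fun u : ℝ => ∑ n ∈ range M, a n * u ^ ((n : ℤ) - M) + a M)
      =ᶠ[atTop] fun u => u ^ (-(M : ℤ)) * ∑ n ∈ range (M + 1), a n * u ^ n := by
    filter_upwards [eventually_ne_atTop 0] with u hu
    rw [sum_range_succ, mul_add, mul_sum, ← zpow_natCast u M, ← mul_assoc, mul_comm _ (a M),
      mul_assoc, ← zpow_add₀ hu, neg_add_cancel, zpow_zero, mul_one]
    refine congrArg (· + a M) (sum_congr rfl fun n _ => ?_)
    rw [← zpow_natCast u n, mul_left_comm, ← zpow_add₀ hu, neg_add_eq_sub]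
  refine Tendsto.congr' heq ?_
  simpa using (tendsto_finsetSum (range M) fun n hn =>
    (tendsto_zpow_atTop_zero (by simpa using hn : (n : ℤ) - M < 0)).const_mul (a n)).add_const (a M)

/-- Let `κ ≥ 1` be an integer and let `a_{2κ−1} = 1`,
`a_r = −(κ/(2κ−1−r)) ∑_{n=r+1}^{2κ−1} C(n,r) a_n` for `r < 2κ−1`, and
`q(u) = ∑_{n=0}^{2κ−1} a_n u^n`.  Then `(u q(u))′ = κ (q(u) + q(u+1))` for all real `u`
and `u^{1−2κ} q(u) → 1` as `u → ∞`. -/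
theorem q_polynomial_solution (κ : ℕ) (hκ : 1 ≤ κ) (a : ℕ → ℝ)
    (ha_top : a (2 * κ - 1) = 1)
    (ha_rec : ∀ r : ℕ, r < 2 * κ - 1 →
      a r = -((κ : ℝ) / (2 * (κ : ℝ) - 1 - (r : ℝ))) *
        ∑ n ∈ Finset.Icc (r + 1) (2 * κ - 1), (n.choose r : ℝ) * a n)
    (q : ℝ → ℝ) (hq : q = fun u : ℝ => ∑ n ∈ Finset.range (2 * κ), a n * u ^ n) :
    (∀ u : ℝ, HasDerivAt (fun t : ℝ => t * q t) ((κ : ℝ) * (q u + q (u + 1))) u) ∧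
    Filter.Tendsto (fun u : ℝ => u ^ (1 - 2 * (κ : ℤ)) * q u) Filter.atTop (nhds 1) := by
  set M := 2 * κ - 1
  have hMκ : 2 * κ = M + 1 := by omega
  have hMκ_real : (M : ℝ) + 1 = 2 * κ := by exact_mod_cast hMκ.symm
  have hexp : 1 - 2 * (κ : ℤ) = -(M : ℤ) := by omega
  rw [hMκ] at hq
  subst hq
  refine ⟨fun u => ?_, ?_⟩
  · rw [mul_sum_pow_add_sum_add_one_pow _ M a (add_one_mul_eq_of_rec _ M hMκ_real a ha_rec)]
    exact hasDerivAt_mul_sum_pow a _ u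
  · rw [hexp, ← ha_top]
    exact tendsto_zpow_neg_mul_sum_pow a M
end

section
/- Let κ ≥ 1 be an integer, let γ denote the Euler–Mascheroni constant, set A = κ!·(2e^γ)^κ, and let σ : ℝ_{>0} → ℝ be the continuous function with σ(u) = A^{−1} u^κ for u ∈ (0, 2] and such that u ↦ u^{−κ}σ(u) is differentiable on (2, ∞) with (d/du)(u^{−κ}σ(u)) = −κ u^{−κ−1} σ(u−2) for u > 2. Then for every u ∈ [0, 1], A·σ(3 − u) = (3 − u)^κ (1 − κ·log((3 − u)/2)) + κ ∑_{n=1}^{κ} (1 − u)^n (3 − u)^{κ−n}/n. -/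
/-!
On `(2, 3]` the delay term `σ (u - 2)` is given by the initial condition, so the equation becomes
explicit: `A u^{-κ} σ(u)` has derivative `-κ x^κ / u` with `x = (u - 2) / u`. Since
`dx/du = 2 / u²`, the geometric sum shows that `log (u / 2) - ∑_{n ≤ κ} x^n / n` has derivative
`x^κ / u`. Hence `A u^{-κ} σ(u)` and `1 - κ (log (u / 2) - ∑_{n ≤ κ} x^n / n)` have the same
derivative on `(2, 3)` and both equal `1` at `u = 2`, so they agree on `[2, 3]` by the mean
value theorem.
-/

open Finset Real

theorem hasDerivAt_sum_Icc_pow_div {f : ℝ → ℝ} {f' t : ℝ} (κ : ℕ) (hf : HasDerivAt f f' t) :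
    HasDerivAt (fun s => ∑ n ∈ Icc 1 κ, f s ^ n / n) (f' * ∑ i ∈ range κ, f t ^ i) t := by
  have hterm : ∀ n ∈ Icc 1 κ, HasDerivAt (fun s => f s ^ n / n) (f t ^ (n - 1) * f') t := by
    intro n hn
    have hn0 : (n : ℝ) ≠ 0 := by have := (mem_Icc.mp hn).1; positivity
    refine ((hf.pow n).div_const (n : ℝ)).congr_deriv ?_
    field_simp
  refine (HasDerivAt.fun_sum hterm).congr_deriv ?_
  rw [mul_sum, ← Ico_add_one_right_eq_Icc, sum_Ico_eq_sum_range]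
  simp [mul_comm, add_comm]

theorem hasDerivAt_log_div_sub_sum_Icc_pow_div (κ : ℕ) {a t : ℝ} (ha : a ≠ 0) (ht : t ≠ 0) :
    HasDerivAt (fun s => log (s / a) - ∑ n ∈ Icc 1 κ, ((s - a) / s) ^ n / n)
      ((t - a) ^ κ / t ^ (κ + 1)) t := by
  have hlog : HasDerivAt (fun s => log (s / a)) (1 / t) t := by
    refine (((hasDerivAt_id' t).div_const a).log (div_ne_zero ht ha)).congr_deriv ?_
    field_simp
  have hratio : HasDerivAt (fun s => (s - a) / s) (a / t ^ 2) t := by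
    refine (((hasDerivAt_id' t).sub_const a).div (hasDerivAt_id' t) ht).congr_deriv ?_
    ring
  refine (hlog.sub (hasDerivAt_sum_Icc_pow_div κ hratio)).congr_deriv ?_
  set S := ∑ i ∈ range κ, ((t - a) / t) ^ i
  -- `S * (1 - x) = 1 - x ^ κ` for `x = (t - a) / t`, and `1 - x = a / t`
  have hS : a / t * S = 1 - (t - a) ^ κ / t ^ κ := by
    rw [← div_pow, ← neg_sub, ← geom_sum_mul]
    field_simp
    ring
  calc 1 / t - a / t ^ 2 * S = (1 - a / t * S) / t := by field_simp
    _ = (t - a) ^ κ / t ^ (κ + 1) := by rw [hS, pow_succ]; field_simp; ring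

theorem eq_of_hasDerivAt_eq {f g f' : ℝ → ℝ} {a b : ℝ} (hab : a ≤ b)
    (hf : ContinuousOn f (Set.Icc a b)) (hg : ContinuousOn g (Set.Icc a b))
    (hf' : ∀ x ∈ Set.Ioo a b, HasDerivAt f (f' x) x)
    (hg' : ∀ x ∈ Set.Ioo a b, HasDerivAt g (f' x) x) (ha : f a = g a) : f b = g b := by
  obtain rfl | hab := hab.eq_or_lt
  · exact ha
  obtain ⟨c, -, hc⟩ := exists_hasDerivAt_eq_slope (f - g) (fun _ => 0) hab (hf.sub hg)
    fun x hx => by simpa using (hf' x hx).sub (hg' x hx)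
  have := (div_eq_zero_iff.mp hc.symm).resolve_right (sub_ne_zero.mpr hab.ne')
  simp only [Pi.sub_apply] at this
  linarith

theorem pow_mul_sum_Icc_div_pow_div {w : ℝ} (hw : w ≠ 0) (x : ℝ) (κ : ℕ) :
    w ^ κ * ∑ n ∈ Icc 1 κ, (x / w) ^ n / n = ∑ n ∈ Icc 1 κ, x ^ n * w ^ (κ - n) / n := by
  rw [mul_sum]
  refine sum_congr rfl fun n hn => ?_
  rw [← pow_sub_mul_pow w (mem_Icc.mp hn).2, div_pow]
  field_simp

theorem rpow_neg_natCast_eq_inv_pow (x : ℝ) (n : ℕ) : x ^ (-(n : ℝ)) = (x ^ n)⁻¹ := by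
  rw [rpow_neg_natCast, zpow_neg, zpow_natCast]

theorem sigma_eq_of_mem_Icc_two_three {κ : ℕ} {A : ℝ} (hA : A ≠ 0) {σ : ℝ → ℝ}
    (hσc : ContinuousOn σ (Set.Ioi 0)) (hσ0 : ∀ u ∈ Set.Ioc (0 : ℝ) 2, σ u = A⁻¹ * u ^ κ)
    (hσd : ∀ u : ℝ, 2 < u →
      HasDerivAt (fun t : ℝ => t ^ (-(κ : ℝ)) * σ t)
        (-(κ : ℝ) * u ^ (-(κ : ℝ) - 1) * σ (u - 2)) u)
    {w : ℝ} (hw : w ∈ Set.Icc (2 : ℝ) 3) :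
    A * σ w =
      w ^ κ * (1 - κ * log (w / 2)) + κ * ∑ n ∈ Icc 1 κ, (w - 2) ^ n * w ^ (κ - n) / n := by
  have hw0 : w ≠ 0 := by linarith [hw.1]
  set Φ : ℝ → ℝ := fun s => 1 - κ * (log (s / 2) - ∑ n ∈ Icc 1 κ, ((s - 2) / s) ^ n / n)
  have hΦd : ∀ t ≠ 0, HasDerivAt Φ (-κ * ((t - 2) ^ κ / t ^ (κ + 1))) t := fun t ht =>
    ((hasDerivAt_log_div_sub_sum_Icc_pow_div κ two_ne_zero ht).const_mul (κ : ℝ)).const_sub 1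
      |>.congr_deriv (by ring)
  have hpos : Set.Icc 2 w ⊆ Set.Ioi 0 := fun t ht => show (0 : ℝ) < t by linarith [ht.1]
  have hΦ : A * (w ^ (-(κ : ℝ)) * σ w) = Φ w := by
    refine eq_of_hasDerivAt_eq (f := fun s => A * (s ^ (-(κ : ℝ)) * σ s)) (g := Φ)
      (f' := fun t => -κ * ((t - 2) ^ κ / t ^ (κ + 1))) hw.1 ?_
      (fun t ht => (hΦd t (hpos ht).ne').continuousAt.continuousWithinAt)
      (fun t ht => ?_) (fun t ht => hΦd t (by linarith [ht.1])) ?_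
    · exact continuousOn_const.mul <|
        (continuousOn_id.rpow_const fun t ht => Or.inl (hpos ht).ne').mul (hσc.mono hpos)
    · have ht0 : t ≠ 0 := by linarith [ht.1]
      refine ((hσd t ht.1).const_mul A).congr_deriv ?_
      rw [hσ0 (t - 2) ⟨by linarith [ht.1], by linarith [ht.2, hw.2]⟩, rpow_sub_one ht0,
        rpow_neg_natCast_eq_inv_pow, pow_succ]
      field_simp
    · have hzero : ∑ n ∈ Icc 1 κ, (((2 : ℝ) - 2) / 2) ^ n / n = 0 :=
        sum_eq_zero fun n hn => by simp [zero_pow (Nat.one_le_iff_ne_zero.mp (mem_Icc.mp hn).1)]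
      simp only [Φ, hzero, hσ0 2 ⟨two_pos, le_rfl⟩, rpow_neg_natCast_eq_inv_pow]
      field_simp
      simp
  rw [rpow_neg_natCast_eq_inv_pow] at hΦ
  have hσw : A * σ w = w ^ κ * Φ w := by rw [← hΦ]; field_simp
  rw [hσw, ← pow_mul_sum_Icc_div_pow_div hw0]
  ring

theorem sigma_on_two_three_general (κ : ℕ) (A : ℝ)
    (hA : A = (Nat.factorial κ : ℝ) * (2 * Real.exp Real.eulerMascheroniConstant) ^ κ)
    (σ : ℝ → ℝ) (hσc : ContinuousOn σ (Set.Ioi 0))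
    (hσ0 : ∀ u ∈ Set.Ioc (0 : ℝ) 2, σ u = A⁻¹ * u ^ κ)
    (hσd : ∀ u : ℝ, 2 < u →
      HasDerivAt (fun t : ℝ => t ^ (-(κ : ℝ)) * σ t)
        (-(κ : ℝ) * u ^ (-(κ : ℝ) - 1) * σ (u - 2)) u)
    (u : ℝ) (hu : u ∈ Set.Icc (0 : ℝ) 1) :
    A * σ (3 - u) = (3 - u) ^ κ * (1 - (κ : ℝ) * Real.log ((3 - u) / 2)) +
      (κ : ℝ) * ∑ n ∈ Finset.Icc 1 κ, (1 - u) ^ n * (3 - u) ^ (κ - n) / (n : ℝ) := by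
  have hA0 : A ≠ 0 := by rw [hA]; positivity
  rw [show 1 - u = 3 - u - 2 by ring]
  exact sigma_eq_of_mem_Icc_two_three hA0 hσc hσ0 hσd ⟨by linarith [hu.2], by linarith [hu.1]⟩

/-- Let `κ ≥ 1` be an integer, `A = κ! (2e^γ)^κ`, and let `σ` be the continuous solution
of the DHR differential-delay system with `σ(u) = A⁻¹ u^κ` on `(0,2]`.  Then for
`u ∈ [0,1]`,
`A σ(3−u) = (3−u)^κ (1 − κ log((3−u)/2)) + κ ∑_{n=1}^{κ} (1−u)^n (3−u)^{κ−n}/n`. -/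
theorem sigma_on_two_three (κ : ℕ) (hκ : 1 ≤ κ) (A : ℝ)
    (hA : A = (Nat.factorial κ : ℝ) * (2 * Real.exp Real.eulerMascheroniConstant) ^ κ)
    (σ : ℝ → ℝ) (hσc : ContinuousOn σ (Set.Ioi 0))
    (hσ0 : ∀ u ∈ Set.Ioc (0 : ℝ) 2, σ u = A⁻¹ * u ^ κ)
    (hσd : ∀ u : ℝ, 2 < u →
      HasDerivAt (fun t : ℝ => t ^ (-(κ : ℝ)) * σ t)
        (-(κ : ℝ) * u ^ (-(κ : ℝ) - 1) * σ (u - 2)) u)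
    (u : ℝ) (hu : u ∈ Set.Icc (0 : ℝ) 1) :
    A * σ (3 - u) = (3 - u) ^ κ * (1 - (κ : ℝ) * Real.log ((3 - u) / 2)) +
      (κ : ℝ) * ∑ n ∈ Finset.Icc 1 κ, (1 - u) ^ n * (3 - u) ^ (κ - n) / (n : ℝ) :=
  sigma_on_two_three_general κ A hA σ hσc hσ0 hσd u hu
end
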